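/- arXiv:2101.02574 — 2 statements merged into one kernel-verified Lean document; each statement's English description precedes it below -/
import Mathlib

section
/- Let G be a flow graph with start vertex s and dominator tree D, and let v ≠ s be a non-leaf vertex of D. Then for every vertex w in the subtree D[v] of D rooted at v, there exists a simple directed path from v to w in the induced subgraph G[D[v]] (i.e., a path using only vertices that are descendants of v in D). -/
/-- A (directed) walk in digraph `G` from `a` to `b`, given as its list of vertices. -/
def DiWalk {V : Type*} (G : V → V → Prop) (a b : V) (l : List V) : Prop :=
  List.Chain' G l ∧ l.head? = some a ∧ l.getLast? = some b

/-- `a` dominates `b` in the flow graph `(G, s)`: every walk from `s` to `b` contains `a`. -/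
def Dom {V : Type*} (G : V → V → Prop) (s a b : V) : Prop :=
  ∀ l, DiWalk G s b l → a ∈ l

/-!
Shortcut any walk from `s` to `w` to a simple path; it passes through `v` exactly once. Every
vertex `y` after `v` on it is dominated by `v`: a walk from `s` to `y` avoiding `v` could be
continued along the rest of the path to a walk from `s` to `w` avoiding `v`. So the segment of the
path from `v` on is the required simple path.
-/

namespace DiWalk

variable {V : Type*} {G : V → V → Prop} {a b c x y : V} {l p q : List V}

theorem not_nil : ¬ DiWalk G a b [] := by
  simp [DiWalk]

theorem singleton_iff : DiWalk G a b [x] ↔ x = a ∧ x = b := by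
  simp [DiWalk, List.Chain', eq_comm]

theorem cons_cons_iff : DiWalk G a b (x :: y :: l) ↔ x = a ∧ G x y ∧ DiWalk G y b (y :: l) := by
  simp only [DiWalk, List.Chain', List.isChain_cons_cons, List.head?_cons, Option.some.injEq,
    List.getLast?_cons_cons, true_and]
  tauto

theorem mem_right (h : DiWalk G a b l) : b ∈ l :=
  List.mem_of_getLast? h.2.2

theorem cons (hG : G a c) (h : DiWalk G c b l) : DiWalk G a b (a :: l) := by
  obtain ⟨hc, hh, hl⟩ := h
  obtain ⟨y, l, rfl⟩ := List.exists_cons_of_ne_nil (List.ne_nil_of_mem (List.mem_of_getLast? hl))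
  cases hh
  exact cons_cons_iff.2 ⟨rfl, hG, hc, rfl, hl⟩

theorem suffix (h : DiWalk G a b (p ++ c :: q)) : DiWalk G c b (c :: q) := by
  induction p generalizing a with
  | nil =>
    obtain rfl : c = a := Option.some.inj h.2.1
    exact h
  | cons x p ih =>
    cases p with
    | nil => exact (cons_cons_iff.1 h).2.2
    | cons y p => exact ih (cons_cons_iff.1 h).2.2

theorem append (h₁ : DiWalk G a c l) (h₂ : DiWalk G c b (c :: q)) : DiWalk G a b (l ++ q) := by
  induction l generalizing a with
  | nil => exact absurd h₁ not_nil
  | cons x l ih =>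
    cases l with
    | nil =>
      obtain ⟨rfl, rfl⟩ := singleton_iff.1 h₁
      exact h₂
    | cons y l =>
      obtain ⟨rfl, hxy, h₁⟩ := cons_cons_iff.1 h₁
      exact (ih h₁).cons hxy

theorem exists_nodup (h : DiWalk G a b l) : ∃ l', DiWalk G a b l' ∧ l'.Nodup := by
  induction l generalizing a with
  | nil => exact absurd h not_nil
  | cons x l ih =>
    cases l with
    | nil => exact ⟨[x], h, List.nodup_singleton x⟩
    | cons y l =>
      obtain ⟨rfl, hxy, h⟩ := cons_cons_iff.1 h
      obtain ⟨l', hl', hnodup⟩ := ih h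
      by_cases hx : x ∈ l'
      · obtain ⟨p, q, rfl⟩ := List.append_of_mem hx
        exact ⟨x :: q, hl'.suffix, hnodup.sublist (List.sublist_append_right p _)⟩
      · exact ⟨x :: l', hl'.cons hxy, List.nodup_cons.2 ⟨hx, hnodup⟩⟩

end DiWalk

theorem Dom.refl {V : Type*} (G : V → V → Prop) (s v : V) : Dom G s v v :=
  fun _ h => h.mem_right

theorem Dom.of_mem_after_last_visit {V : Type*} {G : V → V → Prop} {s v w y : V} {p q : List V}
    (hw : Dom G s v w) (hl : DiWalk G s w (p ++ v :: q)) (hvq : v ∉ q) (hy : y ∈ v :: q) :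
    Dom G s v y := by
  rcases List.mem_cons.1 hy with rfl | hyq
  · exact Dom.refl G s y
  obtain ⟨q₁, q₂, rfl⟩ := List.append_of_mem hyq
  intro m hm
  have hyw : DiWalk G y w (y :: q₂) := DiWalk.suffix (p := p ++ v :: q₁) (by simpa using hl)
  rcases List.mem_append.1 (hw _ (hm.append hyw)) with hvm | hvq₂
  · exact hvm
  · exact absurd (by simp [hvq₂]) hvq

theorem stmt_4_general {V : Type*} (G : V → V → Prop) (s : V)
    (hflow : ∀ v, ∃ l, DiWalk G s v l)
    (v : V)
    (w : V) (hw : Dom G s v w) :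
    ∃ l, DiWalk G v w l ∧ l.Nodup ∧ ∀ y ∈ l, Dom G s v y := by
  obtain ⟨l₀, hl₀⟩ := hflow w
  obtain ⟨l, hl, hnodup⟩ := hl₀.exists_nodup
  obtain ⟨p, q, rfl⟩ := List.append_of_mem (hw l hl)
  have hnodup : (v :: q).Nodup := hnodup.sublist (List.sublist_append_right p _)
  exact ⟨v :: q, hl.suffix, hnodup, fun y hy =>
    Dom.of_mem_after_last_visit hw hl (List.nodup_cons.1 hnodup).1 hy⟩

/-- if `v ≠ s` is a non-leaf of the dominator tree of the flow graph
`(G, s)` (i.e. `v` properly dominates some vertex), then for every `w` dominated by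
`v` there is a simple directed path from `v` to `w` using only vertices dominated
by `v` (the induced subgraph `G[D[v]]`). -/
theorem stmt_4 {V : Type*} (G : V → V → Prop) (s : V)
    (hflow : ∀ v, ∃ l, DiWalk G s v l)
    (v : V) (hv : v ≠ s) (hnonleaf : ∃ c, c ≠ v ∧ Dom G s v c)
    (w : V) (hw : Dom G s v w) :
    ∃ l, DiWalk G v w l ∧ l.Nodup ∧ ∀ y ∈ l, Dom G s v y :=
  stmt_4_general G s hflow v w hw
end

section
/- Let G be a directed graph and P = p_1 ... p_ℓ a simple directed path in G. Let u, v be vertices and suppose first*(u) = p_i and last*(v) = p_j both exist, where first*(u) is the earliest vertex of P reachable from u by a satellite path and last*(v) is the latest vertex of P that reaches v by a satellite path. If there exists a u→v path in G passing through a vertex of P, and p_i and p_j are NOT strongly connected in G, then p_i strictly precedes p_j in the order along P. -/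
/-- `Sat G p a b`: there is a satellite walk (internal vertices avoiding `p`)
from `a` to `b` in `G`. -/
def Sat {V : Type*} (G : V → V → Prop) (p : List V) (a b : V) : Prop :=
  ∃ l, DiWalk G a b l ∧ ∀ w ∈ l.tail.dropLast, w ∉ p

namespace List

variable {α : Type*}

theorem exists_eq_append_cons_first {P : α → Prop} :
    ∀ {l : List α}, (∃ x ∈ l, P x) →
      ∃ l₁ c l₂, l = l₁ ++ c :: l₂ ∧ P c ∧ ∀ x ∈ l₁, ¬ P x
  | [], h => by simp at h
  | x :: l, h => by
    by_cases hx : P x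
    · exact ⟨[], x, l, rfl, hx, by simp⟩
    · obtain ⟨l₁, c, l₂, rfl, hc, hl₁⟩ :=
        exists_eq_append_cons_first (by simpa [hx] using h)
      exact ⟨x :: l₁, c, l₂, rfl, hc, by simpa [hx]⟩

theorem exists_eq_append_cons_last {P : α → Prop} {l : List α}
    (h : ∃ x ∈ l, P x) : ∃ l₁ c l₂, l = l₁ ++ c :: l₂ ∧ P c ∧ ∀ x ∈ l₂, ¬ P x := by
  obtain ⟨l₁, c, l₂, hl, hc, hl₁⟩ :=
    exists_eq_append_cons_first (l := l.reverse) (by simpa using h)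
  refine ⟨l₂.reverse, c, l₁.reverse, ?_, hc, by simpa using hl₁⟩
  simpa using congrArg reverse hl

theorem IsChain.reflTransGen_get {r : α → α → Prop} {l : List α} (hl : l.IsChain r)
    {i j : Fin l.length} (hij : i ≤ j) : Relation.ReflTransGen r (l.get i) (l.get j) := by
  rcases hij.eq_or_lt with rfl | hlt
  · exact .refl
  · have : l.Pairwise (Relation.ReflTransGen r) :=
      isChain_iff_pairwise.mp (hl.imp fun _ _ => .single)
    exact pairwise_iff_get.mp this i j hlt

end List

section Walks

variable {V : Type*} {G : V → V → Prop} {p l l₁ l₂ : List V} {a b c : V}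

theorem DiWalk.reflTransGen (h : DiWalk G a b l) : Relation.ReflTransGen G a b := by
  obtain ⟨hc, hh, hl⟩ := h
  cases l with
  | nil => simp at hh
  | cons x l =>
    obtain rfl : x = a := by simpa using hh
    exact List.relationReflTransGen_of_exists_isChain_cons l hc (List.getLast_of_mem_getLast? hl)

theorem diWalk_append_cons_iff :
    DiWalk G a b (l₁ ++ c :: l₂) ↔ DiWalk G a c (l₁ ++ [c]) ∧ DiWalk G c b (c :: l₂) := by
  have hhead : (l₁ ++ c :: l₂).head? = (l₁ ++ [c]).head? := by cases l₁ <;> rfl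
  simp only [DiWalk, List.Chain']
  rw [List.isChain_split, hhead, List.getLast?_append_cons, List.getLast?_concat, List.head?_cons]
  tauto

theorem DiWalk.sat_of_forall_notMem_append_singleton (h : DiWalk G a c (l ++ [c]))
    (hl : ∀ x ∈ l, x ∉ p) : Sat G p a c :=
  ⟨_, h, fun x hx => hl x <| by
    cases l with
    | nil => simp at hx
    | cons y l => simpa using List.mem_cons_of_mem y (by simpa using hx)⟩

theorem DiWalk.sat_of_forall_notMem_cons (h : DiWalk G c b (c :: l))
    (hl : ∀ x ∈ l, x ∉ p) : Sat G p c b :=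
  ⟨_, h, fun x hx => hl x (List.mem_of_mem_dropLast hx)⟩

theorem DiWalk.exists_sat_reflTransGen_sat (h : DiWalk G a b l) (hp : ∃ w ∈ l, w ∈ p) :
    ∃ x ∈ p, ∃ y ∈ p, Sat G p a x ∧ Relation.ReflTransGen G x y ∧ Sat G p y b := by
  obtain ⟨l₁, x, l₂, rfl, hx, hl₁⟩ := List.exists_eq_append_cons_first hp
  obtain ⟨hax, hxb⟩ := diWalk_append_cons_iff.mp h
  obtain ⟨m₁, y, m₂, hm, hy, hm₂⟩ :=
    List.exists_eq_append_cons_last ⟨x, List.mem_cons_self, hx⟩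
  rw [hm] at hxb
  obtain ⟨hxy, hyb⟩ := diWalk_append_cons_iff.mp hxb
  exact ⟨x, hx, y, hy, hax.sat_of_forall_notMem_append_singleton hl₁, hxy.reflTransGen,
    hyb.sat_of_forall_notMem_cons hm₂⟩

end Walks

theorem stmt_7_general {V : Type*} (G : V → V → Prop) (p : List V)
    (hchain : List.Chain' G p) (u v : V)
    (i j : Fin p.length)
    (hi2 : ∀ i' : Fin p.length, Sat G p u (p.get i') → i ≤ i')
    (hj2 : ∀ j' : Fin p.length, Sat G p (p.get j') v → j' ≤ j)
    (hthrough : ∃ l, DiWalk G u v l ∧ ∃ w ∈ l, w ∈ p)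
    (hnsc : ¬ (Relation.ReflTransGen G (p.get i) (p.get j) ∧
               Relation.ReflTransGen G (p.get j) (p.get i))) :
    (i : ℕ) < (j : ℕ) := by
  obtain ⟨l, hl, hp⟩ := hthrough
  obtain ⟨x, hx, y, hy, hux, hxy, hyv⟩ := hl.exists_sat_reflTransGen_sat hp
  obtain ⟨i', rfl⟩ := List.get_of_mem hx
  obtain ⟨j', rfl⟩ := List.get_of_mem hy
  by_contra! hji
  exact hnsc ⟨((hchain.reflTransGen_get (hi2 i' hux)).trans hxy).trans
    (hchain.reflTransGen_get (hj2 j' hyv)), hchain.reflTransGen_get hji⟩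

/-- if `first*(u) = p.get i` and `last*(v) = p.get j` exist, some
`u → v` path passes through `V(P)`, and `p.get i`, `p.get j` are not strongly
connected in `G`, then `p.get i` strictly precedes `p.get j` on `P`. -/
theorem stmt_7 {V : Type*} (G : V → V → Prop) (p : List V)
    (hchain : List.Chain' G p) (hnodup : p.Nodup) (u v : V)
    (i j : Fin p.length)
    (hi1 : Sat G p u (p.get i))
    (hi2 : ∀ i' : Fin p.length, Sat G p u (p.get i') → i ≤ i')
    (hj1 : Sat G p (p.get j) v)
    (hj2 : ∀ j' : Fin p.length, Sat G p (p.get j') v → j' ≤ j)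
    (hthrough : ∃ l, DiWalk G u v l ∧ ∃ w ∈ l, w ∈ p)
    (hnsc : ¬ (Relation.ReflTransGen G (p.get i) (p.get j) ∧
               Relation.ReflTransGen G (p.get j) (p.get i))) :
    (i : ℕ) < (j : ℕ) :=
  stmt_7_general G p hchain u v i j hi2 hj2 hthrough hnsc
end
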